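/- arXiv:1912.02511 — 2 statements merged into one kernel-verified Lean document; each statement's English description precedes it below -/
import Mathlib

section
/- Let A be a trace-class operator on a Hilbert space, a and b vectors, and c a scalar. Then det(I − A + c·(a ⊗ b)) = (1 − c)·det(I − A) + c·det(I − A + a ⊗ b), where a ⊗ b denotes the rank-one operator x ↦ ⟨x, b⟩ a (equivalently, in finite dimensions A is an n×n matrix and a, b ∈ ℂ^n). -/
open Matrix Polynomial

private lemma smul_vecMulVec {n : ℕ} (a b : Fin n → ℂ) (d : ℂ) :
    d • Matrix.vecMulVec a b = Matrix.vecMulVec (d • a) b := by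
  ext i j
  simp [Matrix.vecMulVec_apply, mul_assoc]

private lemma det_one_add_smul_unique (d : ℂ) (K : Matrix (Fin 1) (Fin 1) ℂ) :
    (1 + d • K).det = 1 + d * K default default := by
  simp [Matrix.det_unique, Matrix.one_apply]

private lemma key_invertible {n : ℕ} (M : Matrix (Fin n) (Fin n) ℂ)
    (hM : IsUnit M.det) (a b : Fin n → ℂ) (c : ℂ) :
    (M + c • Matrix.vecMulVec a b).det
      = (1 - c) * M.det + c * (M + Matrix.vecMulVec a b).det := by
  set k : ℂ := (replicateRow (Fin 1) b * M⁻¹ * replicateCol (Fin 1) a) default default with hk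
  have key : ∀ d : ℂ, (M + d • Matrix.vecMulVec a b).det = M.det * (1 + d * k) := by
    intro d
    rw [smul_vecMulVec, Matrix.vecMulVec_eq (Fin 1), Matrix.det_add_replicateCol_mul_replicateRow hM]
    have hcol : replicateCol (Fin 1) (d • a) = d • replicateCol (Fin 1) a := by
      ext i j; simp
    rw [hcol, show replicateRow (Fin 1) b * M⁻¹ * (d • replicateCol (Fin 1) a)
        = d • (replicateRow (Fin 1) b * M⁻¹ * replicateCol (Fin 1) a) by
      rw [Matrix.mul_smul]]
    have h1 : (1 + d • (replicateRow (Fin 1) b * M⁻¹ * replicateCol (Fin 1) a)).det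
        = 1 + d * k := by
      rw [Matrix.det_unique]
      simp [hk, Matrix.one_apply]
    exact congrArg (M.det * ·) h1
  have h1 := key 1
  rw [one_smul, one_mul] at h1
  rw [key c, h1]
  ring

/-- `det(I - A + c·(a⊗b)) = (1-c)·det(I-A) + c·det(I-A+a⊗b)` for a rank-one
perturbation, in finite dimensions. -/
theorem det_one_sub_add_smul_vecMulVec
    (n : ℕ) (A : Matrix (Fin n) (Fin n) ℂ) (a b : Fin n → ℂ) (c : ℂ) :
    (1 - A + c • Matrix.vecMulVec a b).det
      = (1 - c) * (1 - A).det + c * (1 - A + Matrix.vecMulVec a b).det := by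
  -- write M z = 1 - A + z • 1 and prove the identity for all z, using density of
  -- the z's where M z is invertible.
  set p : ℂ[X] := ((1 - A).map Polynomial.C + (X : ℂ[X]) • 1).det with hp
  have hp_eval : ∀ z : ℂ, p.eval z = (1 - A + z • 1).det := by
    intro z
    have : p.eval z = ((Polynomial.evalRingHom z) p) := rfl
    rw [this, hp, RingHom.map_det]
    congr 1
    ext i j
    rcases eq_or_ne i j with h | h <;>
      simp [h, Matrix.one_apply, Matrix.map_apply, RingHom.mapMatrix_apply]
  have hp_ne : p ≠ 0 := by
    have : p = ((-(1 - A)).charpoly).comp 1 * 1 ∨ True := Or.inr trivial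
    -- show p is the charpoly of -(1-A), hence monic, hence nonzero
    have hpc : p = (-(1 - A)).charpoly := by
      rw [hp, Matrix.charpoly]
      congr 1
      ext i j
      rcases eq_or_ne i j with h | h
      · subst h
        rw [Matrix.charmatrix_apply_eq]
        simp [Matrix.map_apply, Matrix.one_apply, sub_eq_add_neg, add_comm]
      · rw [Matrix.charmatrix_apply_ne _ _ _ h]
        simp [Matrix.map_apply, Matrix.one_apply, h]
    rw [hpc]
    exact (Matrix.charpoly_monic _).ne_zero
  have hfin : Set.Finite {z : ℂ | p.IsRoot z} := Polynomial.finite_setOf_isRoot hp_ne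
  have hdense : Dense {z : ℂ | p.IsRoot z}ᶜ := hfin.countable.dense_compl ℂ
  have hcont1 : Continuous fun z : ℂ =>
      (1 - A + z • 1 + c • Matrix.vecMulVec a b).det := by
    apply Continuous.matrix_det
    fun_prop
  have hcont2 : Continuous fun z : ℂ =>
      (1 - c) * (1 - A + z • 1).det + c * (1 - A + z • 1 + Matrix.vecMulVec a b).det := by
    apply Continuous.add
    · exact continuous_const.mul (Continuous.matrix_det (by fun_prop))
    · exact continuous_const.mul (Continuous.matrix_det (by fun_prop))
  have heq : (fun z : ℂ => (1 - A + z • 1 + c • Matrix.vecMulVec a b).det)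
      = fun z : ℂ =>
        (1 - c) * (1 - A + z • 1).det + c * (1 - A + z • 1 + Matrix.vecMulVec a b).det := by
    apply Continuous.ext_on hdense hcont1 hcont2
    intro z hz
    have hunit : IsUnit (1 - A + z • 1).det := by
      rw [← hp_eval z]
      exact isUnit_iff_ne_zero.mpr hz
    exact key_invertible (1 - A + z • 1) hunit a b c
  have := congrFun heq 0
  simpa using this
end

section
/- Let f be holomorphic in an annulus containing the circle γ_1 of radius 1 about 0, with Fourier (Laurent) coefficients f̂_k = (1/2πi)∮_{γ_1} f(ζ) ζ^{−k−1} dζ, and let κ ≥ 1 and p ≥ 1 be integers. Denote by D_p(g) the p×p Toeplitz determinant det(ĝ_{i−j})_{1≤i,j≤p}. Then D_p(ζ^{κ} f(ζ)) = (−1)^{κp} ∮_{Γ_0^κ} ∏_{j=1}^κ (λ_j^{p} dλ_j / (2πi λ_j)) · D_p( ∏_{j=1}^κ (1 − ζ/λ_j) · f(ζ) ), where Γ_0 is a small circle about 0 and the integrand's Toeplitz determinant is taken of the symbol ∏_j(1 − ζ/λ_j) f(ζ). -/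
open Complex

/-- Laurent (Fourier) coefficient of a symbol on the unit circle:
`ĝ_k = (1/2πi) ∮_{|ζ|=1} g(ζ) ζ^{-k-1} dζ`. -/
noncomputable def fcoef (g : ℂ → ℂ) (k : ℤ) : ℂ :=
  (2 * Real.pi * Complex.I)⁻¹ *
    circleIntegral (fun ζ => g ζ * ζ ^ (-k - 1)) 0 1

/-- The `p×p` Toeplitz determinant `D_p(g) = det(ĝ_{i-j})`. -/
noncomputable def toepDet (p : ℕ) (g : ℂ → ℂ) : ℂ :=
  (Matrix.of fun i j : Fin p => fcoef g ((i : ℤ) - (j : ℤ))).det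

/-- Iterated contour integral `∏_{j=1}^κ (1/2πi)∮_{|λ_j|=ε} dλ_j`. -/
noncomputable def iterLam (ε : ℝ) : (κ : ℕ) → ((Fin κ → ℂ) → ℂ) → ℂ
  | 0, F => F finZeroElim
  | κ + 1, F => (2 * Real.pi * Complex.I)⁻¹ *
      circleIntegral (fun lam => iterLam ε κ fun l => F (Fin.snoc l lam)) 0 ε

/-! ### Auxiliary lemmas -/

lemma sphere_ne_zero {R : ℝ} (hR : 0 < R) {z : ℂ} (hz : z ∈ Metric.sphere (0:ℂ) R) :
    z ≠ 0 := by
  intro h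
  subst h
  simp at hz
  exact hR.ne' hz.symm

lemma two_pi_I_ne : (2 * Real.pi * Complex.I) ≠ 0 := by
  simp [Real.pi_ne_zero, Complex.I_ne_zero, Complex.ofReal_ne_zero]

lemma circleIntegrable_finset_sum {ι : Type*} (s : Finset ι) (f : ι → ℂ → ℂ) {c : ℂ} {R : ℝ}
    (h : ∀ i ∈ s, CircleIntegrable (f i) c R) :
    CircleIntegrable (fun z => ∑ i ∈ s, f i z) c R := by
  classical
  induction s using Finset.induction with
  | empty => simpa using circleIntegrable_const (0:ℂ) c R
  | insert a s hx ih =>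
    have h1 : CircleIntegrable (f a) c R := h a (Finset.mem_insert_self a s)
    have h2 : CircleIntegrable (fun z => ∑ i ∈ s, f i z) c R :=
      ih fun i hi => h i (Finset.mem_insert_of_mem hi)
    have : CircleIntegrable (fun z => f a z + ∑ i ∈ s, f i z) c R := h1.add h2
    simpa [Finset.sum_insert hx, funext_iff] using this

lemma circleIntegral_finset_sum {ι : Type*} (s : Finset ι) (f : ι → ℂ → ℂ) (c : ℂ) (R : ℝ)
    (h : ∀ i ∈ s, CircleIntegrable (f i) c R) :
    circleIntegral (fun z => ∑ i ∈ s, f i z) c R = ∑ i ∈ s, circleIntegral (f i) c R := by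
  simp only [circleIntegral]
  rw [← intervalIntegral.integral_finset_sum (fun i hi => (h i hi).out)]
  congr 1
  funext θ
  rw [Finset.smul_sum]

lemma circleIntegrable_const_mul {f : ℂ → ℂ} {c : ℂ} {R : ℝ}
    (hf : CircleIntegrable f c R) (a : ℂ) : CircleIntegrable (fun z => a * f z) c R := by
  unfold CircleIntegrable at *
  exact hf.const_mul a

lemma circleIntegrable_zpow {R : ℝ} (hR : 0 < R) (n : ℤ) :
    CircleIntegrable (fun z : ℂ => z ^ n) 0 R := by
  have h : (0:ℂ) ∉ Metric.sphere (0:ℂ) |R| := by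
    simp [abs_of_pos hR]
    exact hR.ne
  have := circleIntegrable_sub_zpow_iff (c := (0:ℂ)) (w := 0) (R := R) (n := n)
  simpa using this.mpr (Or.inr (Or.inr h))

lemma circleIntegral_zpow {R : ℝ} (hR : 0 < R) (n : ℤ) :
    circleIntegral (fun z : ℂ => z ^ n) 0 R
      = if n = -1 then 2 * Real.pi * Complex.I else 0 := by
  split_ifs with hn
  · subst hn
    have := circleIntegral.integral_sub_inv_of_mem_ball
      (c := (0:ℂ)) (w := 0) (R := R) (by simpa using hR)
    simpa [zpow_neg_one] using this
  · have := circleIntegral.integral_sub_zpow_of_ne hn 0 0 R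
    simpa using this

lemma fcoef_shift (h : ℂ → ℂ) (k : ℤ) :
    fcoef (fun ζ => ζ * h ζ) k = fcoef h (k - 1) := by
  unfold fcoef
  congr 1
  apply circleIntegral.integral_congr zero_le_one
  intro z hz
  have hz0 : z ≠ 0 := sphere_ne_zero one_pos hz
  have e : z ^ (-(k-1) - 1) = z ^ (-k - 1) * z := by
    rw [show -(k-1) - 1 = (-k - 1) + 1 by ring, zpow_add₀ hz0, zpow_one]
  simp only []
  rw [e]
  ring

lemma fcoef_factor (h : ℂ → ℂ) (hh : ContinuousOn h (Metric.sphere 0 1)) {lam : ℂ}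
    (hl : lam ≠ 0) (k : ℤ) :
    fcoef (fun ζ => (1 - ζ / lam) * h ζ) k = fcoef h k - lam⁻¹ * fcoef h (k - 1) := by
  have hint : ∀ m : ℤ, CircleIntegrable (fun ζ => h ζ * ζ ^ m) 0 1 := by
    intro m
    apply ContinuousOn.circleIntegrable zero_le_one
    exact hh.mul (continuousOn_id.zpow₀ m (fun z hz => Or.inl (sphere_ne_zero one_pos hz)))
  have e1 : circleIntegral (fun ζ => (fun ζ => (1 - ζ / lam) * h ζ) ζ * ζ ^ (-k - 1)) 0 1
      = circleIntegral (fun ζ => h ζ * ζ ^ (-k - 1)) 0 1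
        - lam⁻¹ * circleIntegral (fun ζ => h ζ * ζ ^ (-(k-1) - 1)) 0 1 := by
    rw [circleIntegral.integral_congr zero_le_one
      (g := fun ζ => h ζ * ζ ^ (-k - 1) - lam⁻¹ * (h ζ * ζ ^ (-(k-1) - 1)))
      (by
        intro z hz
        have hz0 : z ≠ 0 := sphere_ne_zero one_pos hz
        have e : z ^ (-(k-1) - 1) = z ^ (-k - 1) * z := by
          rw [show -(k-1) - 1 = (-k - 1) + 1 by ring, zpow_add₀ hz0, zpow_one]
        simp only []
        rw [e]
        ring)]
    rw [circleIntegral.integral_sub (hint _) (circleIntegrable_const_mul (hint _) _),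
      circleIntegral.integral_const_mul]
  unfold fcoef
  rw [e1]
  ring

lemma iterLam_const_mul (ε : ℝ) (c : ℂ) :
    ∀ (κ : ℕ) (F : (Fin κ → ℂ) → ℂ),
      iterLam ε κ (fun l => c * F l) = c * iterLam ε κ F := by
  intro κ
  induction κ with
  | zero => intro F; simp [iterLam]
  | succ κ ih =>
    intro F
    simp only [iterLam]
    rw [show (fun lam => iterLam ε κ fun l => c * F (Fin.snoc l lam))
        = fun lam => c * iterLam ε κ (fun l => F (Fin.snoc l lam)) from
      funext fun lam => ih _]
    rw [circleIntegral.integral_const_mul]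
    ring

/-- The key one-variable step: blowing up one factor of `ζ`. -/
lemma lemA (p : ℕ) (hp : 1 ≤ p) (ε : ℝ) (hε : 0 < ε)
    (h : ℂ → ℂ) (hh : ContinuousOn h (Metric.sphere 0 1)) :
    toepDet p (fun ζ => ζ * h ζ)
      = (-1) ^ p * ((2 * Real.pi * Complex.I)⁻¹ *
          circleIntegral
            (fun lam => lam ^ (p - 1) * toepDet p (fun ζ => (1 - ζ / lam) * h ζ)) 0 ε) := by
  classical
  set A : Fin p → Fin p → ℂ := fun i j => fcoef h ((i : ℤ) - j) with hA
  set B : Fin p → Fin p → ℂ := fun i j => fcoef h ((i : ℤ) - j - 1) with hB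
  -- the integrand as an explicit Laurent polynomial in `lam`
  have key : ∀ lam : ℂ, lam ≠ 0 →
      lam ^ (p - 1) * toepDet p (fun ζ => (1 - ζ / lam) * h ζ)
        = ∑ σ : Equiv.Perm (Fin p), ∑ S ∈ (Finset.univ : Finset (Fin p)).powerset,
            (((Equiv.Perm.sign σ : ℤ) : ℂ) *
              ((∏ i ∈ S, (-(B (σ i) i))) * ∏ i ∈ Finset.univ \ S, A (σ i) i)) *
                lam ^ ((p : ℤ) - 1 - S.card) := by
    intro lam hl
    have hM : (Matrix.of fun i j : Fin p =>
        fcoef (fun ζ => (1 - ζ / lam) * h ζ) ((i : ℤ) - (j : ℤ)))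
        = Matrix.of fun i j : Fin p => lam⁻¹ * (-(B i j)) + A i j := by
      ext i j
      simp only [Matrix.of_apply]
      rw [fcoef_factor h hh hl]
      simp only [hA, hB]
      ring
    unfold toepDet
    rw [hM, Matrix.det_apply']
    rw [Finset.mul_sum]
    apply Finset.sum_congr rfl
    intro σ _
    simp only [Matrix.of_apply]
    rw [Finset.prod_add, Finset.mul_sum, Finset.mul_sum]
    apply Finset.sum_congr rfl
    intro S hS
    have hcard : S.card ≤ p := by
      have := Finset.card_le_card (Finset.mem_powerset.mp hS)
      simpa using this
    have h1 : (∏ i ∈ S, (lam⁻¹ * (-(B (σ i) i))))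
        = lam⁻¹ ^ S.card * ∏ i ∈ S, (-(B (σ i) i)) := by
      rw [Finset.prod_mul_distrib, Finset.prod_const]
    have h2 : (lam : ℂ) ^ (p - 1) * lam⁻¹ ^ S.card = lam ^ ((p : ℤ) - 1 - S.card) := by
      have e1 : (lam : ℂ) ^ (p - 1) = lam ^ (((p : ℤ) - 1)) := by
        rw [← zpow_natCast]
        congr 1
        omega
      have e2 : (lam⁻¹ : ℂ) ^ S.card = lam ^ (-(S.card : ℤ)) := by
        rw [inv_pow, ← zpow_natCast, ← zpow_neg]
      rw [e1, e2, ← zpow_add₀ hl]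
      congr 1
    calc lam ^ (p - 1) * (((Equiv.Perm.sign σ : ℤ) : ℂ) *
          ((∏ i ∈ S, (lam⁻¹ * (-(B (σ i) i)))) * ∏ i ∈ Finset.univ \ S, A (σ i) i))
        = (((Equiv.Perm.sign σ : ℤ) : ℂ) *
            ((∏ i ∈ S, (-(B (σ i) i))) * ∏ i ∈ Finset.univ \ S, A (σ i) i)) *
              (lam ^ (p - 1) * lam⁻¹ ^ S.card) := by rw [h1]; ring
      _ = _ := by rw [h2]
  -- replace the integrand via `key` on the circle
  rw [circleIntegral.integral_congr hε.le
    (fun z hz => key z (sphere_ne_zero hε hz))]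
  -- integrate term by term
  rw [circleIntegral_finset_sum _ _ _ _ (fun σ _ =>
    circleIntegrable_finset_sum _ _ (fun S _ => by
      exact circleIntegrable_const_mul (circleIntegrable_zpow hε ((p : ℤ) - 1 - S.card)) _))]
  have hterm : ∀ σ : Equiv.Perm (Fin p),
      circleIntegral (fun lam => ∑ S ∈ (Finset.univ : Finset (Fin p)).powerset,
          (((Equiv.Perm.sign σ : ℤ) : ℂ) *
            ((∏ i ∈ S, (-(B (σ i) i))) * ∏ i ∈ Finset.univ \ S, A (σ i) i)) *
              lam ^ ((p : ℤ) - 1 - S.card)) 0 ε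
        = (((Equiv.Perm.sign σ : ℤ) : ℂ) * ∏ i, (-(B (σ i) i))) *
            (2 * Real.pi * Complex.I) := by
    intro σ
    rw [circleIntegral_finset_sum _ _ _ _ (fun S _ => by
      exact circleIntegrable_const_mul (circleIntegrable_zpow hε _) _)]
    have hval : ∀ S ∈ (Finset.univ : Finset (Fin p)).powerset,
        circleIntegral (fun lam =>
          (((Equiv.Perm.sign σ : ℤ) : ℂ) *
            ((∏ i ∈ S, (-(B (σ i) i))) * ∏ i ∈ Finset.univ \ S, A (σ i) i)) *
              lam ^ ((p : ℤ) - 1 - S.card)) 0 ε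
          = (((Equiv.Perm.sign σ : ℤ) : ℂ) *
              ((∏ i ∈ S, (-(B (σ i) i))) * ∏ i ∈ Finset.univ \ S, A (σ i) i)) *
                (if ((p : ℤ) - 1 - S.card) = -1 then 2 * Real.pi * Complex.I else 0) := by
      intro S _
      rw [circleIntegral.integral_const_mul, circleIntegral_zpow hε]
    rw [Finset.sum_congr rfl hval]
    rw [Finset.sum_eq_single_of_mem (Finset.univ : Finset (Fin p))
      (Finset.mem_powerset_self _)]
    · have hcU : (Finset.univ : Finset (Fin p)).card = p := by simp
      rw [hcU]
      rw [if_pos (by ring)]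
      simp
    · intro S hS hne
      have hlt : S.card < p := by
        have hss : S ⊂ Finset.univ := (Finset.ssubset_iff_subset_ne).mpr
          ⟨Finset.mem_powerset.mp hS, hne⟩
        have := Finset.card_lt_card hss
        simpa using this
      rw [if_neg (by omega), mul_zero]
  rw [Finset.sum_congr rfl (fun σ _ => hterm σ)]
  -- recognize the determinant of `-B`
  have hdet : ∑ σ : Equiv.Perm (Fin p),
      (((Equiv.Perm.sign σ : ℤ) : ℂ) * ∏ i, (-(B (σ i) i))) * (2 * Real.pi * Complex.I)
      = ((-1) ^ p * toepDet p (fun ζ => ζ * h ζ)) * (2 * Real.pi * Complex.I) := by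
    rw [← Finset.sum_mul]
    congr 1
    have e1 : ∑ σ : Equiv.Perm (Fin p),
        (((Equiv.Perm.sign σ : ℤ) : ℂ) * ∏ i, (-(B (σ i) i)))
        = (Matrix.of fun i j : Fin p => -(B i j)).det := by
      rw [Matrix.det_apply']
      simp only [Matrix.of_apply]
    rw [e1]
    have e2 : (Matrix.of fun i j : Fin p => -(B i j)) = -(Matrix.of B) := by
      ext i j; simp
    rw [e2, Matrix.det_neg]
    have e3 : (Matrix.of B).det = toepDet p (fun ζ => ζ * h ζ) := by
      unfold toepDet
      congr 1
      ext i j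
      simp only [Matrix.of_apply, hB]
      rw [fcoef_shift]
    rw [e3]
    simp
  rw [hdet]
  have hpow : ((-1:ℂ)) ^ p * (-1:ℂ) ^ p = 1 := by
    rw [← mul_pow]; norm_num
  field_simp [two_pi_I_ne]
  linear_combination (-(toepDet p fun ζ => ζ * h ζ)) * hpow

/-- Main induction. -/
lemma main_aux (p : ℕ) (hp : 1 ≤ p) (ε : ℝ) (hε : 0 < ε) :
    ∀ (κ : ℕ) (f : ℂ → ℂ), ContinuousOn f (Metric.sphere 0 1) →
      toepDet p (fun ζ => ζ ^ κ * f ζ)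
        = (-1) ^ (κ * p) * iterLam ε κ (fun l =>
            (∏ j, l j ^ (p - 1)) *
              toepDet p (fun ζ => (∏ j, (1 - ζ / l j)) * f ζ)) := by
  intro κ
  induction κ with
  | zero =>
    intro f hf
    simp [iterLam]
  | succ κ ih =>
    intro f hf
    have hstep : toepDet p (fun ζ => ζ ^ (κ + 1) * f ζ)
        = toepDet p (fun ζ => ζ * ((fun z => z ^ κ * f z) ζ)) := by
      congr 1; funext ζ; ring
    rw [hstep, lemA p hp ε hε (fun z => z ^ κ * f z) (((continuous_pow κ).continuousOn).mul hf)]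
    have hint_eq : (fun lam : ℂ => lam ^ (p - 1) *
          toepDet p (fun ζ => (1 - ζ / lam) * ((fun z => z ^ κ * f z) ζ)))
        = fun lam => (-1) ^ (κ * p) * iterLam ε κ (fun l =>
            (∏ j : Fin (κ + 1), (Fin.snoc l lam : Fin (_ + 1) → ℂ) j ^ (p - 1)) *
              toepDet p (fun ζ => (∏ j : Fin (κ + 1), (1 - ζ / (Fin.snoc l lam : Fin (_ + 1) → ℂ) j)) * f ζ)) := by
      funext lam
      have h2 : toepDet p (fun ζ => (1 - ζ / lam) * ((fun z => z ^ κ * f z) ζ))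
          = toepDet p (fun ζ => ζ ^ κ * ((fun z => (1 - z / lam) * f z) ζ)) := by
        congr 1; funext ζ; ring
      rw [h2, ih (fun z => (1 - z / lam) * f z)
        (((continuous_const.sub (continuous_id.div_const lam)).continuousOn).mul hf)]
      rw [show lam ^ (p - 1) * ((-1) ^ (κ * p) * iterLam ε κ (fun l =>
            (∏ j, l j ^ (p - 1)) *
              toepDet p (fun ζ => (∏ j, (1 - ζ / l j)) * ((fun z => (1 - z / lam) * f z) ζ))))
          = (-1) ^ (κ * p) * (lam ^ (p - 1) * iterLam ε κ (fun l =>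
            (∏ j, l j ^ (p - 1)) *
              toepDet p (fun ζ => (∏ j, (1 - ζ / l j)) * ((fun z => (1 - z / lam) * f z) ζ))))
        from by ring]
      congr 1
      rw [← iterLam_const_mul]
      congr 1
      funext l
      have hps : (∏ j : Fin (κ + 1), (Fin.snoc l lam : Fin (_ + 1) → ℂ) j ^ (p - 1))
          = (∏ j : Fin κ, l j ^ (p - 1)) * lam ^ (p - 1) := by
        rw [Fin.prod_univ_castSucc]
        simp [Fin.snoc_castSucc, Fin.snoc_last]
      have hqs : ∀ ζ : ℂ, (∏ j : Fin (κ + 1), (1 - ζ / (Fin.snoc l lam : Fin (_ + 1) → ℂ) j))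
          = (∏ j : Fin κ, (1 - ζ / l j)) * (1 - ζ / lam) := by
        intro ζ
        rw [Fin.prod_univ_castSucc]
        simp [Fin.snoc_castSucc, Fin.snoc_last]
      have hts : toepDet p (fun ζ => (∏ j : Fin (κ + 1), (1 - ζ / (Fin.snoc l lam : Fin (_ + 1) → ℂ) j)) * f ζ)
          = toepDet p (fun ζ => (∏ j : Fin κ, (1 - ζ / l j)) * ((1 - ζ / lam) * f ζ)) := by
        congr 1
        funext ζ
        rw [hqs ζ]
        ring
      rw [hps, hts]
      ring
    rw [hint_eq]
    rw [circleIntegral.integral_const_mul]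
    have hiter : iterLam ε (κ + 1) (fun l =>
        (∏ j, l j ^ (p - 1)) *
          toepDet p (fun ζ => (∏ j, (1 - ζ / l j)) * f ζ))
        = (2 * Real.pi * Complex.I)⁻¹ *
          circleIntegral (fun lam => iterLam ε κ (fun l =>
            (∏ j : Fin (κ + 1), (Fin.snoc l lam : Fin (_ + 1) → ℂ) j ^ (p - 1)) *
              toepDet p (fun ζ => (∏ j : Fin (κ + 1), (1 - ζ / (Fin.snoc l lam : Fin (_ + 1) → ℂ) j)) * f ζ))) 0 ε := by
      simp only [iterLam]
    rw [hiter]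
    rw [show (κ + 1) * p = κ * p + p by ring, pow_add]
    ring

/-- Blowing up the Fisher–Hartwig-type singularity `ζ^κ` of a Toeplitz symbol:
`D_p(ζ^κ f) = (-1)^{κp} ∮ ∏_j λ_j^p dλ_j/(2πi λ_j) · D_p(∏_j (1-ζ/λ_j) f)`. -/
theorem toeplitz_singular_blowup
    (f : ℂ → ℂ) (r₁ r₂ : ℝ) (hr₀ : 0 ≤ r₁) (hr : r₁ < 1) (hr2 : 1 < r₂)
    (hf : DifferentiableOn ℂ f {z | r₁ < ‖z‖ ∧ ‖z‖ < r₂})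
    (κ p : ℕ) (hκ : 1 ≤ κ) (hp : 1 ≤ p) (ε : ℝ) (hε : 0 < ε) :
    toepDet p (fun ζ => ζ ^ κ * f ζ)
      = (-1) ^ (κ * p) * iterLam ε κ (fun l =>
          (∏ j, l j ^ (p - 1)) *
            toepDet p (fun ζ => (∏ j, (1 - ζ / l j)) * f ζ)) := by
  have hsub : Metric.sphere (0:ℂ) 1 ⊆ {z | r₁ < ‖z‖ ∧ ‖z‖ < r₂} := by
    intro z hz
    have hz1 : ‖z‖ = 1 := by simpa using hz
    constructor
    · rw [hz1]; exact hr
    · rw [hz1]; exact hr2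
  exact main_aux p hp ε hε κ f (hf.continuousOn.mono hsub)
end
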